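/- Let r ≥ 2 be an integer. For every n ≥ 2, s^{(r)}_n = s^{(r)}_{n−1} + (r^{2(t+1)} + r)/(r + 1), where t ≥ 0 is the largest integer such that r^t divides n − 1; note that r + 1 divides r^{2(t+1)} + r, so the quotient is an integer. -/

import Mathlib

/-- Moser function `m_r(n)`: reinterpret the base-`r` digits of `n` as base-`r²` digits,
i.e. `m_r(n) = Σ_i ν_i r^(2i)` where `n = Σ_i ν_i r^i` is the base-`r` expansion. -/
def moser (r n : ℕ) : ℕ := Nat.ofDigits (r ^ 2) (Nat.digits r n)

/-- `s^(r)_n = r · m_r(n−1) + 1` for `n ≥ 1`. -/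
def moserS (r n : ℕ) : ℕ := r * moser r (n - 1) + 1

/-- The `i`-th base-`r` digit of `n` (0 if beyond the expansion). -/
def dig (r n i : ℕ) : ℕ := (Nat.digits r n).getD i 0

/-- Josephus–Groër survivor function: with `M = N` if `N` is odd, `M = N − 1` otherwise,
and `M = Σ_j b_j 2^j` the binary expansion, `W(N) = 1 + Σ_{j odd} b_j 2^j`. -/
def W (N : ℕ) : ℕ :=
  let M := if N % 2 = 1 then N else N - 1
  1 + ((((Nat.digits 2 M).zipIdx.map Prod.swap).filter (fun p => p.1 % 2 = 1)).map (fun p => p.2 * 2 ^ p.1)).sum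

/-!
`m_r` rewrites base-`r` digits as base-`r²` digits. Write `n - 1 = r^t k` with `r ∤ k`: then `n - 1`
ends in `t` zero digits preceded by a nonzero digit, and `n - 2` ends in `t` digits `r - 1` preceded by
that digit minus one. Hence `m_r(n - 1) - m_r(n - 2) = r^{2t} - m_r(r^t - 1)`, and the geometric sum
`(r + 1) m_r(r^t - 1) = r^{2t} - 1` turns this into `(r^{2t+1} + 1)/(r + 1)`.
-/

lemma moser_add_mul {r : ℕ} (hr : 1 < r) {d : ℕ} (hd : d < r) (a : ℕ) :
    moser r (d + r * a) = d + r ^ 2 * moser r a := by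
  rcases eq_or_ne d 0 with rfl | hd0
  · rcases eq_or_ne a 0 with rfl | ha0
    · simp [moser]
    · rw [moser, Nat.digits_add r hr 0 a hd (Or.inr ha0), Nat.ofDigits_cons, moser]
  · rw [moser, Nat.digits_add r hr d a hd (Or.inl hd0), Nat.ofDigits_cons, moser]

lemma moser_add_pow_mul {r : ℕ} (hr : 1 < r) (t : ℕ) {b : ℕ} (hb : b < r ^ t) (a : ℕ) :
    moser r (b + r ^ t * a) = moser r b + r ^ (2 * t) * moser r a := by
  induction t generalizing b with
  | zero => simp_all [moser]
  | succ t ih =>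
    have hdiv : b / r < r ^ t := Nat.div_lt_of_lt_mul (by rwa [mul_comm, ← pow_succ])
    have hmod : b % r < r := Nat.mod_lt b (by omega)
    have hsplit : b + r ^ (t + 1) * a = b % r + r * (b / r + r ^ t * a) := by
      conv_lhs => rw [← Nat.mod_add_div b r]
      ring
    rw [hsplit, moser_add_mul hr hmod, ih hdiv, ← Nat.mod_add_div b r, moser_add_mul hr hmod,
      Nat.mod_add_div b r]
    ring

lemma moser_pow_mul {r : ℕ} (hr : 1 < r) (t a : ℕ) :
    moser r (r ^ t * a) = r ^ (2 * t) * moser r a := by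
  simpa [moser] using moser_add_pow_mul hr t (pow_pos (by omega) t) a

lemma succ_mul_moser_pow_sub_one {r : ℕ} (hr : 1 < r) (t : ℕ) :
    (r + 1) * moser r (r ^ t - 1) + 1 = r ^ (2 * t) := by
  induction t with
  | zero => simp [moser]
  | succ t ih =>
    have hpos : 1 ≤ r ^ t := Nat.one_le_pow t r (by omega)
    have hsplit : r ^ (t + 1) - 1 = (r - 1) + r * (r ^ t - 1) := by
      zify [hpos, Nat.one_le_pow (t + 1) r (by omega), (by omega : 1 ≤ r)]
      ring
    rw [hsplit, moser_add_mul hr (by omega)]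
    zify [(by omega : 1 ≤ r)] at ih ⊢
    linear_combination r ^ 2 * ih

lemma moser_eq_moser_sub_one_add_one {r : ℕ} (hr : 1 < r) {k : ℕ} (hk : ¬ r ∣ k) :
    moser r k = moser r (k - 1) + 1 := by
  have hmod : k % r ≠ 0 := fun h => hk (Nat.dvd_of_mod_eq_zero h)
  have hlt : k % r < r := Nat.mod_lt k (by omega)
  have hpred : k - 1 = (k % r - 1) + r * (k / r) := by
    have := Nat.mod_add_div k r
    omega
  rw [hpred, moser_add_mul hr (by omega), ← Nat.mod_add_div k r, moser_add_mul hr hlt,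
    Nat.mod_add_div k r]
  omega

lemma succ_mul_moser_pow_mul {r : ℕ} (hr : 1 < r) (t : ℕ) {k : ℕ} (hk : ¬ r ∣ k) :
    (r + 1) * moser r (r ^ t * k) = (r + 1) * moser r (r ^ t * k - 1) + (r ^ (2 * t + 1) + 1) := by
  have hk0 : 1 ≤ k := Nat.one_le_iff_ne_zero.mpr (by rintro rfl; exact hk (dvd_zero r))
  have hpos : 1 ≤ r ^ t := Nat.one_le_pow t r (by omega)
  have hpred : r ^ t * k - 1 = (r ^ t - 1) + r ^ t * (k - 1) := by
    zify [hk0, hpos, Nat.one_le_iff_ne_zero.mpr (Nat.mul_ne_zero (by omega) (by omega) :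
      r ^ t * k ≠ 0)]
    ring
  rw [hpred, moser_add_pow_mul hr t (by omega), moser_pow_mul hr,
    moser_eq_moser_sub_one_add_one hr hk]
  linear_combination (succ_mul_moser_pow_sub_one hr t).symm

theorem moserS_recursion_general (r : ℕ) (hr : 2 ≤ r) (n : ℕ)
    (t : ℕ) (ht : r ^ t ∣ n - 1) (ht' : ¬ r ^ (t + 1) ∣ n - 1) :
    (r + 1) ∣ r ^ (2 * (t + 1)) + r ∧
      moserS r n = moserS r (n - 1) + (r ^ (2 * (t + 1)) + r) / (r + 1) := by
  obtain ⟨k, hk⟩ := ht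
  have hkr : ¬ r ∣ k := fun ⟨c, hc⟩ => ht' ⟨c, by rw [hk, hc, pow_succ, mul_assoc]⟩
  obtain ⟨D, hD⟩ : r + 1 ∣ r ^ (2 * t + 1) + 1 := by
    simpa using Odd.nat_add_dvd_pow_add_pow r 1 (odd_two_mul_add_one t)
  have hstep : moser r (n - 1) = moser r (n - 1 - 1) + D := by
    have h := succ_mul_moser_pow_mul hr t hkr
    rw [← hk, hD, ← mul_add] at h
    exact Nat.eq_of_mul_eq_mul_left (by omega) h
  have hsum : r ^ (2 * (t + 1)) + r = (r + 1) * (r * D) := by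
    linear_combination r * hD
  refine ⟨hsum ▸ dvd_mul_right _ _, ?_⟩
  rw [hsum, Nat.mul_div_cancel_left _ (by omega), moserS, moserS, hstep]
  ring

/-- Recursion for `s^(r)`: for `n ≥ 2`,
`s^(r)_n = s^(r)_{n−1} + (r^(2(t+1)) + r)/(r + 1)` where `t` is the largest integer with
`r^t ∣ n − 1`; moreover `r + 1` divides `r^(2(t+1)) + r`. -/
theorem moserS_recursion (r : ℕ) (hr : 2 ≤ r) (n : ℕ) (hn : 2 ≤ n)
    (t : ℕ) (ht : r ^ t ∣ n - 1) (ht' : ¬ r ^ (t + 1) ∣ n - 1) :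
    (r + 1) ∣ r ^ (2 * (t + 1)) + r ∧
      moserS r n = moserS r (n - 1) + (r ^ (2 * (t + 1)) + r) / (r + 1) :=
  moserS_recursion_general r hr n t ht ht'
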